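/- arXiv:2209.05685 — 2 statements merged into one kernel-verified Lean document; each statement's English description precedes it below -/
import Mathlib

section
/- Let η ∈ {0,1}ⁿ be a fixed vector, let A = (a_{ij}) be an n×n real matrix, and let {γ_{1i} : η_i = 1} and {γ_{2j} : η_j = 0} be jointly independent Bernoulli random variables with E γ_{1i} = π_{1i} and E γ_{2j} = π_{2j}. Then for every τ with 0 < τ ≤ 1/(4‖A‖₂²): E[ exp( τ Σ_{i : η_i = 1} γ_{1i} Σ_{j : η_j = 0} a_{ij}² γ_{2j} ) ] ≤ exp( 1.44 τ Σ_{i ≠ j} a_{ij}² π_{1i} π_{2j} ). -/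
set_option synthInstance.maxHeartbeats 1000000
set_option maxHeartbeats 1000000

open MeasureTheory ProbabilityTheory Real Finset

noncomputable section

/-- The sub-Gaussian (ψ₂) norm: `sup_{p ≥ 1} (E|X|^p)^{1/p} / √p`. -/
def psi2Norm {Ω : Type*} [MeasurableSpace Ω] (μ : Measure Ω) (X : Ω → ℝ) : ℝ :=
  ⨆ p : {p : ℝ // 1 ≤ p}, (∫ ω, |X ω| ^ (p : ℝ) ∂μ) ^ (1 / (p : ℝ)) / Real.sqrt p

/-- The operator (spectral) norm of a real square matrix. -/
def opNorm {n : ℕ} (A : Matrix (Fin n) (Fin n) ℝ) : ℝ :=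
  ‖(Matrix.toEuclideanCLM (𝕜 := ℝ) A : EuclideanSpace ℝ (Fin n) →L[ℝ] EuclideanSpace ℝ (Fin n))‖

/-- The Frobenius norm of a real square matrix. -/
def frobNorm {n : ℕ} (A : Matrix (Fin n) (Fin n) ℝ) : ℝ :=
  Real.sqrt (∑ i, ∑ j, (A i j) ^ 2)

/-- The Euclidean norm of a vector. -/
def vecNorm {n : ℕ} (v : Fin n → ℝ) : ℝ := Real.sqrt (∑ i, (v i) ^ 2)

lemma aux_pow_le {x y : ℝ} (hx : 0 < x) (hy : 0 < y) (n : ℕ) (hn : n ≠ 0)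
    (h : x ^ n ≤ y ^ n) : x ≤ y := by
  by_contra hc
  push_neg at hc
  exact absurd h (not_le.mpr (pow_lt_pow_left₀ hc hy.le hn))

lemma exp_quarter_le : Real.exp 4⁻¹ ≤ 1.3 := by
  have h4 : (Real.exp 4⁻¹) ^ (4:ℕ) = Real.exp 1 := by
    rw [← Real.exp_nat_mul]; norm_num
  refine aux_pow_le (Real.exp_pos _) (by norm_num) 4 (by norm_num) ?_
  rw [h4]
  have := Real.exp_one_lt_d9
  nlinarith [this]

lemma exp_of_le_03 {x : ℝ} (hx : x ≤ 0.3) : Real.exp x ≤ 1.36 := by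
  have h1 : Real.exp x ≤ Real.exp 0.3 := Real.exp_le_exp.mpr hx
  have h10 : (Real.exp 0.3) ^ (10:ℕ) = Real.exp 3 := by
    rw [← Real.exp_nat_mul]; norm_num
  have h3 : Real.exp 3 = (Real.exp 1)^(3:ℕ) := by
    rw [← Real.exp_nat_mul]; norm_num
  have he : (Real.exp 1)^(3:ℕ) < (2.7182818286:ℝ)^(3:ℕ) :=
    pow_lt_pow_left₀ Real.exp_one_lt_d9 (Real.exp_pos 1).le (by norm_num)
  refine h1.trans (aux_pow_le (Real.exp_pos _) (by norm_num) 10 (by norm_num) ?_)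
  rw [h10, h3]
  refine he.le.trans ?_
  norm_num

lemma const_le_144 : 4*(Real.exp (Real.exp 4⁻¹ - 1) - 1) ≤ 1.44 := by
  have h1 : Real.exp 4⁻¹ - 1 ≤ 0.3 := by linarith [exp_quarter_le]
  have h2 : Real.exp (Real.exp 4⁻¹ - 1) ≤ 1.36 := exp_of_le_03 h1
  linarith



lemma chord_exp {b x : ℝ} (hb : 0 < b) (h0 : 0 ≤ x) (hx : x ≤ b) :
    Real.exp x - 1 ≤ (Real.exp b - 1) / b * x := by
  have h := convexOn_exp.2 (Set.mem_univ (0:ℝ)) (Set.mem_univ b)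
    (show (0:ℝ) ≤ 1 - x / b by
      have : x / b ≤ 1 := (div_le_one hb).mpr hx
      linarith)
    (show (0:ℝ) ≤ x / b by positivity)
    (by ring)
  have hxb : (1 - x / b) • (0:ℝ) + (x / b) • b = x := by
    simp only [smul_eq_mul]; field_simp; ring
  rw [hxb] at h
  simp only [Real.exp_zero, smul_eq_mul] at h
  have hd : (Real.exp b - 1) / b * x = (x / b) * (Real.exp b - 1) := by ring
  rw [hd]; linarith

lemma integrable_bdd {Ω : Type*} [MeasurableSpace Ω] {μ : Measure Ω} [IsFiniteMeasure μ]
    {f : Ω → ℝ} (hm : Measurable f) {C : ℝ} (h : ∀ ω, |f ω| ≤ C) : Integrable f μ :=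
  ⟨hm.aestronglyMeasurable, HasFiniteIntegral.of_bounded (C := C) (Filter.Eventually.of_forall h)⟩

lemma workhorse {Ω ι : Type*} [MeasurableSpace Ω] {μ : Measure Ω}
    {V : ι → Ω → ℝ} (hm : ∀ x, Measurable (V x))
    (hindep : iIndepFun V μ)
    (x0 : ι) (S : Finset ι) (hx0 : x0 ∉ S)
    (F : (S → ℝ) → ℝ) (hF : Measurable F) :
    ∫ ω, V x0 ω * F (fun i => V i.1 ω) ∂μ
      = (∫ ω, V x0 ω ∂μ) * ∫ ω, F (fun i => V i.1 ω) ∂μ := by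
  classical
  have hdisj : Disjoint ({x0} : Finset ι) S := Finset.disjoint_singleton_left.mpr hx0
  have hIF := hindep.indepFun_finset {x0} S hdisj hm
  have hφ : Measurable (fun g : ({x0} : Finset ι) → ℝ => g ⟨x0, Finset.mem_singleton_self x0⟩) :=
    measurable_pi_apply _
  have hind2 : IndepFun (fun ω => V x0 ω) (fun ω => F (fun i => V i.1 ω)) μ :=
    hIF.comp hφ hF
  have hmF : Measurable (fun ω => F (fun i : S => V i.1 ω)) :=
    hF.comp (measurable_pi_iff.mpr fun i => hm i.1)
  exact hind2.integral_mul_eq_mul_integral (hm x0).aestronglyMeasurable hmF.aestronglyMeasurable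

lemma abstract_mgf {Ω ι : Type*} [MeasurableSpace Ω] [DecidableEq ι] {μ : Measure Ω}
    [IsProbabilityMeasure μ]
    (V : ι → Ω → ℝ) (p : ι → ℝ)
    (hm : ∀ x, Measurable (V x)) (hB : ∀ x ω, V x ω = 0 ∨ V x ω = 1)
    (hp : ∀ x, ∫ ω, V x ω ∂μ = p x)
    (hindep : iIndepFun V μ)
    (I' J' : Finset ι) (hd : Disjoint I' J')
    (u : ι → ι → ℝ) (hu : ∀ i j, 0 ≤ u i j)
    (hrow : ∀ i ∈ I', ∑ j ∈ J', u i j ≤ 4⁻¹)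
    (hcol : ∀ j ∈ J', ∑ i ∈ I', u i j ≤ 4⁻¹) :
    ∫ ω, Real.exp (∑ i ∈ I', V i ω * ∑ j ∈ J', u i j * V j ω) ∂μ
      ≤ Real.exp ((4*(Real.exp (Real.exp 4⁻¹ - 1) - 1)) *
          ∑ i ∈ I', ∑ j ∈ J', u i j * p i * p j) := by
  classical
  have hV0 : ∀ x ω, 0 ≤ V x ω := fun x ω => by rcases hB x ω with h | h <;> rw [h] <;> norm_num
  have hV1 : ∀ x ω, V x ω ≤ 1 := fun x ω => by rcases hB x ω with h | h <;> rw [h] <;> norm_num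
  have hp0 : ∀ x, 0 ≤ p x := fun x => (hp x) ▸ integral_nonneg (hV0 x)
  have hp1 : ∀ x, p x ≤ 1 := by
    intro x
    rw [← hp x]
    calc ∫ ω, V x ω ∂μ ≤ ∫ _, (1:ℝ) ∂μ := by
          refine integral_mono (integrable_bdd (hm x) (C := 1) ?_) (integrable_const 1) (hV1 x)
          intro ω; rw [abs_le]; exact ⟨by linarith [hV0 x ω], hV1 x ω⟩
      _ = 1 := by simp
  set k1 : ℝ := 4 * (Real.exp 4⁻¹ - 1) with hk1
  have he1 : (1:ℝ) < Real.exp 4⁻¹ := by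
    rw [show (1:ℝ) = Real.exp 0 by simp]
    exact Real.exp_lt_exp.mpr (by norm_num)
  have hk1pos : 0 < k1 := by rw [hk1]; linarith
  set c : ι → Ω → ℝ := fun i ω => ∑ j ∈ J', u i j * V j ω with hcdef
  have hmc : ∀ i, Measurable (c i) := fun i =>
    Finset.measurable_sum _ fun j _ => (measurable_const.mul (hm j))
  have hc0 : ∀ i ω, 0 ≤ c i ω := fun i ω =>
    Finset.sum_nonneg fun j _ => mul_nonneg (hu i j) (hV0 j ω)
  have hcb : ∀ i ∈ I', ∀ ω, c i ω ≤ 4⁻¹ := by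
    intro i hi ω
    calc c i ω ≤ ∑ j ∈ J', u i j := by
          refine Finset.sum_le_sum fun j _ => ?_
          calc u i j * V j ω ≤ u i j * 1 :=
                mul_le_mul_of_nonneg_left (hV1 j ω) (hu i j)
            _ = u i j := mul_one _
      _ ≤ 4⁻¹ := hrow i hi
  have chord1 : ∀ i ∈ I', ∀ ω, Real.exp (c i ω) - 1 ≤ k1 * c i ω := by
    intro i hi ω
    have h := chord_exp (b := 4⁻¹) (by norm_num) (hc0 i ω) (hcb i hi ω)
    have heq : (Real.exp 4⁻¹ - 1) / 4⁻¹ = k1 := by rw [hk1]; ring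
    rwa [heq] at h
  -- boundedness and integrability of the main exponential integrands
  have hsum_bd : ∀ (w : ι → Ω → ℝ), (∀ i ω, 0 ≤ w i ω) → (∀ i ω, w i ω ≤ 1) →
      ∀ (T : Finset ι), T ⊆ I' → ∀ ω,
      0 ≤ (∑ i ∈ T, w i ω * c i ω) ∧ (∑ i ∈ T, w i ω * c i ω) ≤ (I'.card : ℝ) := by
    intro w hw0 hw1 T hT ω
    constructor
    · exact Finset.sum_nonneg fun i _ => mul_nonneg (hw0 i ω) (hc0 i ω)
    · calc ∑ i ∈ T, w i ω * c i ω ≤ ∑ _i ∈ T, (1:ℝ) := by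
            refine Finset.sum_le_sum fun i hi => ?_
            have h1 := hcb i (hT hi) ω
            have := hw1 i ω
            have := hw0 i ω
            nlinarith [hc0 i ω]
        _ = (T.card : ℝ) := by simp
        _ ≤ (I'.card : ℝ) := by exact_mod_cast Finset.card_le_card hT
  have bd_main : ∀ (T T2 : Finset ι), T ⊆ I' → T2 ⊆ I' → ∀ ω,
      Real.exp ((∑ i ∈ T, V i ω * c i ω) + k1 * ∑ i ∈ T2, p i * c i ω)
        ≤ Real.exp ((1 + k1) * (I'.card : ℝ)) := by
    intro T T2 hT hT2 ω
    rw [Real.exp_le_exp]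
    have h1 := hsum_bd V hV0 hV1 T hT ω
    have h2 := hsum_bd (fun i _ => p i) (fun i _ => hp0 i) (fun i _ => hp1 i) T2 hT2 ω
    nlinarith [h1.1, h1.2, h2.1, h2.2, hk1pos]
  have int_main : ∀ (T T2 : Finset ι), T ⊆ I' → T2 ⊆ I' →
      Integrable (fun ω => Real.exp ((∑ i ∈ T, V i ω * c i ω)
        + k1 * ∑ i ∈ T2, p i * c i ω)) μ := by
    intro T T2 hT hT2
    refine integrable_bdd ?_ (C := Real.exp ((1 + k1) * (I'.card : ℝ))) ?_
    · exact (((Finset.measurable_sum _ fun i _ => (hm i).mul (hmc i)).add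
        (measurable_const.mul (Finset.measurable_sum _ fun i _ =>
          measurable_const.mul (hmc i)))).exp)
    · intro ω
      rw [abs_of_nonneg (Real.exp_pos _).le]
      exact bd_main T T2 hT hT2 ω
  -- Phase 1: integrate out the variables in I'
  have phase1 : ∀ T : Finset ι, T ⊆ I' →
      ∫ ω, Real.exp ((∑ i ∈ T, V i ω * c i ω) + k1 * ∑ i ∈ I' \ T, p i * c i ω) ∂μ
        ≤ ∫ ω, Real.exp (k1 * ∑ i ∈ I', p i * c i ω) ∂μ := by
    intro T
    induction T using Finset.induction_on with
    | empty =>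
      intro _
      simp
    | @insert i0 T' hx ih =>
      intro hsub
      have hi0I : i0 ∈ I' := hsub (Finset.mem_insert_self _ _)
      have hT'sub : T' ⊆ I' := (Finset.subset_insert i0 T').trans hsub
      have hi0J : i0 ∉ J' := fun h => (Finset.disjoint_left.mp hd hi0I) h
      set D : Finset ι := I' \ insert i0 T' with hD
      have hDsub : D ⊆ I' := Finset.sdiff_subset
      have hi0D : i0 ∉ D := by
        rw [hD]; simp [Finset.mem_sdiff]
      have hsd : insert i0 D = I' \ T' := by
        rw [hD, Finset.sdiff_insert, Finset.insert_erase]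
        exact Finset.mem_sdiff.mpr ⟨hi0I, hx⟩
      set G : Ω → ℝ := fun ω =>
        Real.exp ((∑ i ∈ T', V i ω * c i ω) + k1 * ∑ i ∈ D, p i * c i ω) with hG
      have hGmeas : Measurable G := by
        rw [hG]
        exact (((Finset.measurable_sum _ fun i _ => (hm i).mul (hmc i)).add
          (measurable_const.mul (Finset.measurable_sum _ fun i _ =>
            measurable_const.mul (hmc i)))).exp)
      have hG0 : ∀ ω, 0 ≤ G ω := fun ω => (Real.exp_pos _).le
      have hGint : Integrable G μ := int_main T' D hT'sub hDsub
      -- the multiplier H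
      set H : Ω → ℝ := fun ω => (Real.exp (c i0 ω) - 1) * G ω with hH
      -- step 1: rewrite the integrand
      have hpt : ∀ ω, Real.exp ((∑ i ∈ insert i0 T', V i ω * c i ω)
          + k1 * ∑ i ∈ I' \ insert i0 T', p i * c i ω) = G ω + V i0 ω * H ω := by
        intro ω
        rw [Finset.sum_insert hx, ← hD]
        have : V i0 ω * c i0 ω + (∑ i ∈ T', V i ω * c i ω) + k1 * ∑ i ∈ D, p i * c i ω
            = V i0 ω * c i0 ω + ((∑ i ∈ T', V i ω * c i ω) + k1 * ∑ i ∈ D, p i * c i ω) := by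
          ring
        rw [add_assoc, Real.exp_add, hG, hH]
        rcases hB i0 ω with h | h <;> rw [h] <;> simp <;> ring
      have hGbd : ∀ ω, G ω ≤ Real.exp ((1 + k1) * (I'.card : ℝ)) :=
        fun ω => bd_main T' D hT'sub hDsub ω
      have hHmeas : Measurable H := ((hmc i0).exp.sub measurable_const).mul hGmeas
      have hexpc0 : ∀ ω, 0 ≤ Real.exp (c i0 ω) - 1 := by
        intro ω
        have h := Real.exp_le_exp.mpr (hc0 i0 ω)
        rw [Real.exp_zero] at h
        linarith
      have hH0 : ∀ ω, 0 ≤ H ω := fun ω => mul_nonneg (hexpc0 ω) (hG0 ω)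
      have hHbd : ∀ ω, |H ω| ≤ Real.exp 4⁻¹ * Real.exp ((1 + k1) * (I'.card : ℝ)) := by
        intro ω
        rw [abs_of_nonneg (hH0 ω)]
        refine mul_le_mul ?_ (hGbd ω) (hG0 ω) (Real.exp_pos _).le
        have : Real.exp (c i0 ω) ≤ Real.exp 4⁻¹ := Real.exp_le_exp.mpr (hcb i0 hi0I ω)
        linarith
      have hHint : Integrable H μ := integrable_bdd hHmeas hHbd
      have hVHint : Integrable (fun ω => V i0 ω * H ω) μ := by
        refine integrable_bdd ((hm i0).mul hHmeas)
          (C := Real.exp 4⁻¹ * Real.exp ((1 + k1) * (I'.card : ℝ))) ?_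
        intro ω
        rw [abs_mul]
        calc |V i0 ω| * |H ω| ≤ 1 * (Real.exp 4⁻¹ * Real.exp ((1 + k1) * (I'.card : ℝ))) := by
              refine mul_le_mul ?_ (hHbd ω) (abs_nonneg _) zero_le_one
              rw [abs_of_nonneg (hV0 i0 ω)]; exact hV1 i0 ω
          _ = _ := one_mul _
      -- express H as a function of the variables in T' ∪ J'
      set S : Finset ι := T' ∪ J' with hS
      have hx0S : i0 ∉ S := by
        rw [hS, Finset.mem_union]
        push_neg
        exact ⟨hx, hi0J⟩
      set F : (S → ℝ) → ℝ := fun g =>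
        (Real.exp (∑ j ∈ J'.attach, u i0 j.1 * g ⟨j.1, Finset.mem_union_right _ j.2⟩) - 1) *
        Real.exp ((∑ i ∈ T'.attach, g ⟨i.1, Finset.mem_union_left _ i.2⟩ *
            (∑ j ∈ J'.attach, u i.1 j.1 * g ⟨j.1, Finset.mem_union_right _ j.2⟩)) +
          k1 * ∑ i ∈ D, p i * (∑ j ∈ J'.attach, u i j.1 * g ⟨j.1, Finset.mem_union_right _ j.2⟩))
        with hF
      have hFmeas : Measurable F := by
        rw [hF]
        fun_prop
      have hFeq : ∀ ω, F (fun i => V i.1 ω) = H ω := by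
        intro ω
        rw [hF, hH, hG, hcdef]
        have e1 : ∀ i : ι, ∑ j ∈ J'.attach, u i ↑j * V (↑j) ω = ∑ j ∈ J', u i j * V j ω :=
          fun i => Finset.sum_attach J' (fun j => u i j * V j ω)
        simp only [e1]
        rw [Finset.sum_attach T' (fun i => V i ω * ∑ j ∈ J', u i j * V j ω)]
      have hw := workhorse hm hindep i0 S hx0S F hFmeas
      simp only [hFeq] at hw
      rw [hp i0] at hw
      -- put everything together
      have hcongr : ∫ ω, Real.exp ((∑ i ∈ insert i0 T', V i ω * c i ω)
          + k1 * ∑ i ∈ I' \ insert i0 T', p i * c i ω) ∂μ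
          = ∫ ω, (G ω + V i0 ω * H ω) ∂μ := by
        refine integral_congr_ae (Filter.Eventually.of_forall fun ω => hpt ω)
      rw [hcongr, integral_add hGint hVHint, hw, ← integral_const_mul (p i0) H,
        ← integral_add hGint (hHint.const_mul _)]
      -- pointwise comparison with the T'-integrand
      have hmono : ∫ ω, (G ω + p i0 * H ω) ∂μ
          ≤ ∫ ω, Real.exp ((∑ i ∈ T', V i ω * c i ω)
              + k1 * ∑ i ∈ I' \ T', p i * c i ω) ∂μ := by
        refine integral_mono (hGint.add (hHint.const_mul _))
          (int_main T' (I' \ T') hT'sub Finset.sdiff_subset) ?_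
        intro ω
        have h1 : Real.exp (c i0 ω) - 1 ≤ k1 * c i0 ω := chord1 i0 hi0I ω
        have h2 : 1 + p i0 * (k1 * c i0 ω) ≤ Real.exp (p i0 * (k1 * c i0 ω)) := by
          have := Real.add_one_le_exp (p i0 * (k1 * c i0 ω))
          linarith
        have h3 : G ω + p i0 * H ω ≤ Real.exp (p i0 * (k1 * c i0 ω)) * G ω := by
          rw [hH]
          have hle : 1 + p i0 * (Real.exp (c i0 ω) - 1) ≤ Real.exp (p i0 * (k1 * c i0 ω)) := by
            have := mul_le_mul_of_nonneg_left h1 (hp0 i0)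
            linarith
          calc G ω + p i0 * ((Real.exp (c i0 ω) - 1) * G ω)
              = (1 + p i0 * (Real.exp (c i0 ω) - 1)) * G ω := by ring
            _ ≤ Real.exp (p i0 * (k1 * c i0 ω)) * G ω :=
                mul_le_mul_of_nonneg_right hle (hG0 ω)
        refine h3.trans (le_of_eq ?_)
        rw [hG, ← Real.exp_add]
        congr 1
        rw [← hsd, Finset.sum_insert hi0D]
        ring
      exact hmono.trans (ih hT'sub)
  -- setting up phase 2
  set t : ι → ℝ := fun j => k1 * ∑ i ∈ I', u i j * p i with htdef
  have ht0 : ∀ j ∈ J', 0 ≤ t j := fun j _ =>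
    mul_nonneg hk1pos.le (Finset.sum_nonneg fun i _ => mul_nonneg (hu i j) (hp0 i))
  have htb : ∀ j ∈ J', t j ≤ Real.exp 4⁻¹ - 1 := by
    intro j hj
    have hsum : ∑ i ∈ I', u i j * p i ≤ 4⁻¹ := by
      calc ∑ i ∈ I', u i j * p i ≤ ∑ i ∈ I', u i j := by
            refine Finset.sum_le_sum fun i _ => ?_
            calc u i j * p i ≤ u i j * 1 := mul_le_mul_of_nonneg_left (hp1 i) (hu i j)
              _ = u i j := mul_one _
        _ ≤ 4⁻¹ := hcol j hj
    calc t j ≤ k1 * 4⁻¹ := mul_le_mul_of_nonneg_left hsum hk1pos.le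
      _ = Real.exp 4⁻¹ - 1 := by rw [hk1]; ring
  have hexpq : Real.exp 4⁻¹ ≤ 1.3 := by
    have h4 : (Real.exp 4⁻¹) ^ (4:ℕ) = Real.exp 1 := by
      rw [← Real.exp_nat_mul]; norm_num
    by_contra hcon
    push_neg at hcon
    have : (1.3:ℝ)^(4:ℕ) < (Real.exp 4⁻¹)^(4:ℕ) :=
      pow_lt_pow_left₀ hcon (by norm_num) (by norm_num)
    rw [h4] at this
    nlinarith [Real.exp_one_lt_d9]
  have ht1 : ∀ j ∈ J', t j ≤ 1 := fun j hj => by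
    have := htb j hj; linarith
  set k2 : ℝ := (Real.exp (Real.exp 4⁻¹ - 1) - 1) / (Real.exp 4⁻¹ - 1) with hk2
  have chord2 : ∀ j ∈ J', Real.exp (t j) - 1 ≤ k2 * t j := by
    intro j hj
    exact chord_exp (by linarith) (ht0 j hj) (htb j hj)
  have phase2 : ∀ U : Finset ι, U ⊆ J' →
      ∫ ω, Real.exp (∑ j ∈ U, V j ω * t j) ∂μ ≤ Real.exp (k2 * ∑ j ∈ U, p j * t j) := by
    have int2 : ∀ (U : Finset ι), U ⊆ J' →
        Integrable (fun ω => Real.exp (∑ j ∈ U, V j ω * t j)) μ := by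
      intro U hU
      refine integrable_bdd ((Finset.measurable_sum _ fun j _ => (hm j).mul measurable_const).exp)
        (C := Real.exp (J'.card : ℝ)) ?_
      intro ω
      rw [abs_of_nonneg (Real.exp_pos _).le, Real.exp_le_exp]
      calc ∑ j ∈ U, V j ω * t j ≤ ∑ _j ∈ U, (1:ℝ) := by
            refine Finset.sum_le_sum fun j hj => ?_
            have h1 := ht1 j (hU hj); have h0 := ht0 j (hU hj)
            have := hV1 j ω; have := hV0 j ω
            nlinarith
        _ = (U.card : ℝ) := by simp
        _ ≤ (J'.card : ℝ) := by exact_mod_cast Finset.card_le_card hU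
    intro U
    induction U using Finset.induction_on with
    | empty => intro _; simp
    | @insert j0 U' hx ih =>
      intro hsub
      have hj0 : j0 ∈ J' := hsub (Finset.mem_insert_self _ _)
      have hU'sub : U' ⊆ J' := (Finset.subset_insert j0 U').trans hsub
      set G : Ω → ℝ := fun ω => Real.exp (∑ j ∈ U', V j ω * t j) with hG
      have hGint : Integrable G μ := int2 U' hU'sub
      have hG0 : (0:ℝ) ≤ ∫ ω, G ω ∂μ := integral_nonneg fun ω => (Real.exp_pos _).le
      set H : Ω → ℝ := fun ω => (Real.exp (t j0) - 1) * G ω with hH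
      have hpt : ∀ ω, Real.exp (∑ j ∈ insert j0 U', V j ω * t j) = G ω + V j0 ω * H ω := by
        intro ω
        rw [Finset.sum_insert hx, Real.exp_add, hG, hH]
        rcases hB j0 ω with h | h <;> rw [h] <;> simp <;> ring
      set F : (U' → ℝ) → ℝ := fun g =>
        (Real.exp (t j0) - 1) * Real.exp (∑ j ∈ U'.attach, g j * t ↑j) with hF
      have hFmeas : Measurable F := by rw [hF]; fun_prop
      have hFeq : ∀ ω, F (fun i => V i.1 ω) = H ω := by
        intro ω
        rw [hF, hH, hG]
        beta_reduce
        rw [Finset.sum_attach U' (fun j => V j ω * t j)]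
      have hw := workhorse hm hindep j0 U' hx F hFmeas
      simp only [hFeq] at hw
      rw [hp j0] at hw
      have hHmeas : Measurable H := measurable_const.mul
        ((Finset.measurable_sum _ fun j _ => (hm j).mul measurable_const).exp)
      have hHint : Integrable H μ := hGint.const_mul _
      have hVHint : Integrable (fun ω => V j0 ω * H ω) μ := by
        refine integrable_bdd ((hm j0).mul hHmeas) (C := Real.exp 1 * Real.exp (J'.card : ℝ)) ?_
        intro ω
        have hb : |H ω| ≤ Real.exp 1 * Real.exp (J'.card : ℝ) := by
          rw [hH]
          rw [abs_mul]
          refine mul_le_mul ?_ ?_ (abs_nonneg _) (Real.exp_pos _).le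
          · have h1 : Real.exp (t j0) ≤ Real.exp 1 := Real.exp_le_exp.mpr (ht1 j0 hj0)
            have h0 : (1:ℝ) ≤ Real.exp (t j0) := by
              have := Real.exp_le_exp.mpr (ht0 j0 hj0)
              rwa [Real.exp_zero] at this
            rw [abs_of_nonneg (by linarith)]
            linarith [Real.exp_pos (1:ℝ)]
          · have := int2 U' hU'sub
            rw [abs_of_nonneg (Real.exp_pos _).le, Real.exp_le_exp]
            calc ∑ j ∈ U', V j ω * t j ≤ ∑ _j ∈ U', (1:ℝ) := by
                  refine Finset.sum_le_sum fun j hj => ?_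
                  have h1 := ht1 j (hU'sub hj); have h0 := ht0 j (hU'sub hj)
                  have := hV1 j ω; have := hV0 j ω
                  nlinarith
              _ = (U'.card : ℝ) := by simp
              _ ≤ (J'.card : ℝ) := by exact_mod_cast Finset.card_le_card hU'sub
        rw [abs_mul]
        calc |V j0 ω| * |H ω| ≤ 1 * (Real.exp 1 * Real.exp (J'.card : ℝ)) := by
              refine mul_le_mul ?_ hb (abs_nonneg _) zero_le_one
              rw [abs_of_nonneg (hV0 j0 ω)]; exact hV1 j0 ω
          _ = _ := one_mul _
      have hcongr : ∫ ω, Real.exp (∑ j ∈ insert j0 U', V j ω * t j) ∂μ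
          = ∫ ω, (G ω + V j0 ω * H ω) ∂μ :=
        integral_congr_ae (Filter.Eventually.of_forall hpt)
      rw [hcongr, integral_add hGint hVHint, hw]
      have hHval : ∫ ω, H ω ∂μ = (Real.exp (t j0) - 1) * ∫ ω, G ω ∂μ := by
        rw [hH]; exact integral_const_mul _ _
      rw [hHval]
      have hfac : 1 + p j0 * (Real.exp (t j0) - 1) ≤ Real.exp (k2 * (p j0 * t j0)) := by
        have h1 := chord2 j0 hj0
        have h2 := mul_le_mul_of_nonneg_left h1 (hp0 j0)
        have h3 := Real.add_one_le_exp (p j0 * (k2 * t j0))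
        have : p j0 * (k2 * t j0) = k2 * (p j0 * t j0) := by ring
        rw [this] at h3
        nlinarith
      calc ∫ ω, G ω ∂μ + p j0 * ((Real.exp (t j0) - 1) * ∫ ω, G ω ∂μ)
          = (1 + p j0 * (Real.exp (t j0) - 1)) * ∫ ω, G ω ∂μ := by ring
        _ ≤ Real.exp (k2 * (p j0 * t j0)) * ∫ ω, G ω ∂μ :=
            mul_le_mul_of_nonneg_right hfac hG0
        _ ≤ Real.exp (k2 * (p j0 * t j0)) * Real.exp (k2 * ∑ j ∈ U', p j * t j) :=
            mul_le_mul_of_nonneg_left (ih hU'sub) (Real.exp_pos _).le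
        _ = Real.exp (k2 * ∑ j ∈ insert j0 U', p j * t j) := by
            rw [← Real.exp_add, Finset.sum_insert hx]
            congr 1
            ring
  -- assembling everything
  have h0 := phase1 I' (Finset.Subset.refl I')
  simp only [Finset.sdiff_self, Finset.sum_empty, mul_zero, add_zero] at h0
  have hbridge : ∀ ω, k1 * ∑ i ∈ I', p i * c i ω = ∑ j ∈ J', V j ω * t j := by
    intro ω
    simp only [hcdef, htdef, Finset.mul_sum]
    rw [Finset.sum_comm]
    exact Finset.sum_congr rfl fun j _ => Finset.sum_congr rfl fun i _ => by ring
  have hk1k2 : k2 * k1 = 4 * (Real.exp (Real.exp 4⁻¹ - 1) - 1) := by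
    have hne : Real.exp 4⁻¹ - 1 ≠ 0 := by linarith
    calc k2 * k1
        = 4 * ((Real.exp (Real.exp 4⁻¹ - 1) - 1) / (Real.exp 4⁻¹ - 1) * (Real.exp 4⁻¹ - 1)) := by
          rw [hk2, hk1]; ring
      _ = 4 * (Real.exp (Real.exp 4⁻¹ - 1) - 1) := by rw [div_mul_cancel₀ _ hne]
  have hC : k2 * ∑ j ∈ J', p j * t j
      = (4 * (Real.exp (Real.exp 4⁻¹ - 1) - 1)) * ∑ i ∈ I', ∑ j ∈ J', u i j * p i * p j := by
    simp only [htdef, Finset.mul_sum]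
    rw [Finset.sum_comm]
    refine Finset.sum_congr rfl fun i _ => Finset.sum_congr rfl fun j _ => ?_
    rw [← hk1k2]
    ring
  calc ∫ ω, Real.exp (∑ i ∈ I', V i ω * ∑ j ∈ J', u i j * V j ω) ∂μ
      = ∫ ω, Real.exp ((∑ i ∈ I', V i ω * c i ω)) ∂μ := by simp only [hcdef]
    _ ≤ ∫ ω, Real.exp (k1 * ∑ i ∈ I', p i * c i ω) ∂μ := h0
    _ = ∫ ω, Real.exp (∑ j ∈ J', V j ω * t j) ∂μ := by
        refine integral_congr_ae (Filter.Eventually.of_forall fun ω => ?_)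
        exact congrArg Real.exp (hbridge ω)
    _ ≤ Real.exp (k2 * ∑ j ∈ J', p j * t j) := phase2 J' (Finset.Subset.refl J')
    _ = Real.exp ((4 * (Real.exp (Real.exp 4⁻¹ - 1) - 1)) *
          ∑ i ∈ I', ∑ j ∈ J', u i j * p i * p j) := by rw [hC]

lemma opNorm_nonneg {n : ℕ} (A : Matrix (Fin n) (Fin n) ℝ) : 0 ≤ opNorm A := norm_nonneg _

lemma col_bound {n : ℕ} (A : Matrix (Fin n) (Fin n) ℝ) (j : Fin n) :
    ∑ i, A i j ^ 2 ≤ opNorm A ^ 2 := by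
  set T := (Matrix.toEuclideanCLM (𝕜 := ℝ) A :
    EuclideanSpace ℝ (Fin n) →L[ℝ] EuclideanSpace ℝ (Fin n)) with hT
  set x : EuclideanSpace ℝ (Fin n) := EuclideanSpace.single j (1:ℝ) with hx
  have hnx : ‖x‖ = 1 := by rw [hx, EuclideanSpace.norm_single]; norm_num
  have happ : T x = (WithLp.equiv _ _).symm (A.mulVec (Pi.single j 1)) := by
    rw [hx, ← EuclideanSpace.toLp_single, Matrix.toEuclideanCLM_toLp, WithLp.equiv_symm_apply]
  have hTx : ‖T x‖ ≤ opNorm A := by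
    calc ‖T x‖ ≤ ‖T‖ * ‖x‖ := T.le_opNorm x
      _ = opNorm A := by rw [hnx, mul_one]; rfl
  have hnorm2 : ‖T x‖ ^ 2 = ∑ i, A i j ^ 2 := by
    rw [happ]
    rw [EuclideanSpace.norm_eq]
    rw [Real.sq_sqrt (by positivity)]
    refine Finset.sum_congr rfl fun i _ => ?_
    rw [Matrix.mulVec_single]
    simp [sq_abs]
  calc ∑ i, A i j ^ 2 = ‖T x‖ ^ 2 := hnorm2.symm
    _ ≤ opNorm A ^ 2 := by
      have h0 : 0 ≤ ‖T x‖ := norm_nonneg _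
      nlinarith [hTx]

lemma opNorm_transpose {n : ℕ} (A : Matrix (Fin n) (Fin n) ℝ) :
    opNorm A.transpose = opNorm A := by
  have hstar : A.transpose = star A := by
    rw [Matrix.star_eq_conjTranspose]
    ext i k
    simp [Matrix.conjTranspose_apply]
  rw [opNorm, opNorm, hstar, map_star, ContinuousLinearMap.star_eq_adjoint]
  exact ContinuousLinearMap.adjoint.norm_map _

lemma row_bound {n : ℕ} (A : Matrix (Fin n) (Fin n) ℝ) (i : Fin n) :
    ∑ j, A i j ^ 2 ≤ opNorm A ^ 2 := by
  have h := col_bound A.transpose i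
  rw [opNorm_transpose] at h
  simpa [Matrix.transpose_apply] using h

/-- Integrating out the Bernoulli random variables (Lemma 5 of the paper). -/
theorem bernoulli_integration_mgf_bound
    (n : ℕ) (Ω : Type) (_mΩ : MeasurableSpace Ω) (μ : Measure Ω) [IsProbabilityMeasure μ]
    (η : Fin n → Bool) (A : Matrix (Fin n) (Fin n) ℝ)
    (γ1 γ2 : Fin n → Ω → ℝ) (π1 π2 : Fin n → ℝ)
    (hm1 : ∀ i, Measurable (γ1 i)) (hm2 : ∀ i, Measurable (γ2 i))
    (hBer1 : ∀ i ω, γ1 i ω = 0 ∨ γ1 i ω = 1)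
    (hBer2 : ∀ i ω, γ2 i ω = 0 ∨ γ2 i ω = 1)
    (hπ1 : ∀ i, ∫ ω, γ1 i ω ∂μ = π1 i)
    (hπ2 : ∀ i, ∫ ω, γ2 i ω ∂μ = π2 i)
    (hindep : iIndepFun
      (fun x : {x : Fin 2 × Fin n // (x.1 = 0 ∧ η x.2 = true) ∨ (x.1 = 1 ∧ η x.2 = false)} =>
        if x.1.1 = 0 then γ1 x.1.2 else γ2 x.1.2) μ)
    (τ : ℝ) (hτ0 : 0 < τ) (hτ : τ ≤ 1 / (4 * opNorm A ^ 2)) :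
    (∫ ω, Real.exp (τ * ∑ i ∈ Finset.univ.filter (fun i => η i = true),
        γ1 i ω * ∑ j ∈ Finset.univ.filter (fun j => η j = false), A i j ^ 2 * γ2 j ω) ∂μ)
      ≤ Real.exp (1.44 * τ * ∑ i, ∑ j, if i ≠ j then A i j ^ 2 * π1 i * π2 j else 0) := by
  classical
  have hNpos : 0 < opNorm A := by
    rcases lt_or_eq_of_le (norm_nonneg (Matrix.toEuclideanCLM (𝕜 := ℝ) A :
        EuclideanSpace ℝ (Fin n) →L[ℝ] EuclideanSpace ℝ (Fin n))) with h | h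
    · exact h
    · exfalso
      have h' : opNorm A = 0 := h.symm
      rw [h'] at hτ
      norm_num at hτ
      linarith
  have hτN : ∀ s : ℝ, s ≤ opNorm A ^ 2 → τ * s ≤ 4⁻¹ := by
    intro s hs
    have hN2 : (0:ℝ) < opNorm A ^ 2 := by positivity
    have h1 : τ * s ≤ τ * opNorm A ^ 2 := mul_le_mul_of_nonneg_left hs hτ0.le
    have h2 : τ * opNorm A ^ 2 ≤ (1 / (4 * opNorm A ^ 2)) * opNorm A ^ 2 :=
      mul_le_mul_of_nonneg_right hτ hN2.le
    have h3 : (1 / (4 * opNorm A ^ 2)) * opNorm A ^ 2 = 4⁻¹ := by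
      rw [div_mul_eq_mul_div, one_mul, div_eq_iff (by positivity : (4:ℝ) * opNorm A ^ 2 ≠ 0)]
      ring
    linarith
  -- the index type and data for the abstract lemma
  set V : {x : Fin 2 × Fin n // (x.1 = 0 ∧ η x.2 = true) ∨ (x.1 = 1 ∧ η x.2 = false)} → Ω → ℝ :=
    (fun x => if x.1.1 = 0 then γ1 x.1.2 else γ2 x.1.2) with hVdef
  set ppp : {x : Fin 2 × Fin n // (x.1 = 0 ∧ η x.2 = true) ∨ (x.1 = 1 ∧ η x.2 = false)} → ℝ :=
    (fun x => if x.1.1 = 0 then π1 x.1.2 else π2 x.1.2) with hpdef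
  set uu : {x : Fin 2 × Fin n // (x.1 = 0 ∧ η x.2 = true) ∨ (x.1 = 1 ∧ η x.2 = false)} →
      {x : Fin 2 × Fin n // (x.1 = 0 ∧ η x.2 = true) ∨ (x.1 = 1 ∧ η x.2 = false)} → ℝ :=
    (fun x y => τ * A x.1.2 y.1.2 ^ 2) with hudef
  set I' : Finset {x : Fin 2 × Fin n // (x.1 = 0 ∧ η x.2 = true) ∨ (x.1 = 1 ∧ η x.2 = false)} :=
    Finset.univ.filter (fun x => x.1.1 = 0) with hI'
  set J' : Finset {x : Fin 2 × Fin n // (x.1 = 0 ∧ η x.2 = true) ∨ (x.1 = 1 ∧ η x.2 = false)} :=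
    Finset.univ.filter (fun x => x.1.1 = 1) with hJ'
  -- basic facts about the index type
  have hxI : ∀ x, x ∈ I' → x.1.1 = 0 ∧ η x.1.2 = true := by
    intro x hx
    rw [hI', Finset.mem_filter] at hx
    refine ⟨hx.2, ?_⟩
    rcases x.2 with ⟨h0, h1⟩ | ⟨h0, h1⟩
    · exact h1
    · rw [hx.2] at h0; exact absurd h0 (by decide)
  have hxJ : ∀ x, x ∈ J' → x.1.1 = 1 ∧ η x.1.2 = false := by
    intro x hx
    rw [hJ', Finset.mem_filter] at hx
    refine ⟨hx.2, ?_⟩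
    rcases x.2 with ⟨h0, h1⟩ | ⟨h0, h1⟩
    · rw [hx.2] at h0; exact absurd h0 (by decide)
    · exact h1
  have hV1g : ∀ x, x.1.1 = 0 → V x = γ1 x.1.2 := by
    intro x h; rw [hVdef]; simp only [if_pos h]
  have hV2g : ∀ x, x.1.1 = 1 → V x = γ2 x.1.2 := by
    intro x h
    rw [hVdef]
    simp only []
    rw [if_neg (by rw [h]; decide)]
  have hp1g : ∀ x, x.1.1 = 0 → ppp x = π1 x.1.2 := by
    intro x h; rw [hpdef]; simp only [if_pos h]
  have hp2g : ∀ x, x.1.1 = 1 → ppp x = π2 x.1.2 := by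
    intro x h
    rw [hpdef]
    simp only []
    rw [if_neg (by rw [h]; decide)]
  have hcases : ∀ x : {x : Fin 2 × Fin n // (x.1 = 0 ∧ η x.2 = true) ∨ (x.1 = 1 ∧ η x.2 = false)},
      x.1.1 = 0 ∨ x.1.1 = 1 := by
    intro x
    rcases x.2 with ⟨h0, _⟩ | ⟨h0, _⟩
    · left; rw [h0]
    · right; rw [h0]
  -- hypotheses of the abstract lemma
  have hm : ∀ x, Measurable (V x) := by
    intro x
    rcases hcases x with h | h
    · rw [hV1g x h]; exact hm1 _
    · rw [hV2g x h]; exact hm2 _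
  have hB : ∀ x ω, V x ω = 0 ∨ V x ω = 1 := by
    intro x ω
    rcases hcases x with h | h
    · rw [hV1g x h]; exact hBer1 _ ω
    · rw [hV2g x h]; exact hBer2 _ ω
  have hpc : ∀ x, ∫ ω, V x ω ∂μ = ppp x := by
    intro x
    rcases hcases x with h | h
    · rw [hV1g x h, hp1g x h]; exact hπ1 _
    · rw [hV2g x h, hp2g x h]; exact hπ2 _
  have hd : Disjoint I' J' := by
    rw [Finset.disjoint_left]
    intro x hxi hxj
    have h0 := (hxI x hxi).1
    have h1 := (hxJ x hxj).1
    rw [h0] at h1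
    exact absurd h1 (by decide)
  have hu : ∀ x y, 0 ≤ uu x y := fun x y => mul_nonneg hτ0.le (sq_nonneg _)
  -- reindexing sums
  have reindexI : ∀ f : Fin n → ℝ,
      ∑ x ∈ I', f x.1.2 = ∑ i ∈ Finset.univ.filter (fun i => η i = true), f i := by
    intro f
    refine Finset.sum_bij' (fun x _ => x.1.2)
      (fun i hi => ⟨(0, i), Or.inl ⟨rfl, (Finset.mem_filter.mp hi).2⟩⟩) ?_ ?_ ?_ ?_ ?_
    · intro x hx
      rw [Finset.mem_filter]
      exact ⟨Finset.mem_univ _, (hxI x hx).2⟩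
    · intro i hi
      rw [hI', Finset.mem_filter]
      exact ⟨Finset.mem_univ _, rfl⟩
    · intro x hx
      apply Subtype.ext
      have h0 := (hxI x hx).1
      show ((0 : Fin 2), x.1.2) = x.1
      exact Prod.ext_iff.mpr ⟨h0.symm, rfl⟩
    · intro i hi
      rfl
    · intro x hx
      rfl
  have reindexJ : ∀ f : Fin n → ℝ,
      ∑ x ∈ J', f x.1.2 = ∑ j ∈ Finset.univ.filter (fun j => η j = false), f j := by
    intro f
    refine Finset.sum_bij' (fun x _ => x.1.2)
      (fun j hj => ⟨(1, j), Or.inr ⟨rfl, (Finset.mem_filter.mp hj).2⟩⟩) ?_ ?_ ?_ ?_ ?_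
    · intro x hx
      rw [Finset.mem_filter]
      exact ⟨Finset.mem_univ _, (hxJ x hx).2⟩
    · intro j hj
      rw [hJ', Finset.mem_filter]
      exact ⟨Finset.mem_univ _, rfl⟩
    · intro x hx
      apply Subtype.ext
      have h0 := (hxJ x hx).1
      show ((1 : Fin 2), x.1.2) = x.1
      exact Prod.ext_iff.mpr ⟨h0.symm, rfl⟩
    · intro j hj
      rfl
    · intro x hx
      rfl
  -- row and column bounds
  have hrow : ∀ x ∈ I', ∑ y ∈ J', uu x y ≤ 4⁻¹ := by
    intro x hx
    rw [hudef]
    simp only []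
    rw [← Finset.mul_sum]
    refine hτN _ ?_
    rw [reindexJ (fun j => A x.1.2 j ^ 2)]
    calc ∑ j ∈ Finset.univ.filter (fun j => η j = false), A x.1.2 j ^ 2
        ≤ ∑ j, A x.1.2 j ^ 2 := by
          refine Finset.sum_le_sum_of_subset_of_nonneg (Finset.filter_subset _ _) ?_
          intro j _ _; positivity
      _ ≤ opNorm A ^ 2 := row_bound A _
  have hcol : ∀ y ∈ J', ∑ x ∈ I', uu x y ≤ 4⁻¹ := by
    intro y hy
    rw [hudef]
    simp only []
    rw [← Finset.mul_sum]
    refine hτN _ ?_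
    rw [reindexI (fun i => A i y.1.2 ^ 2)]
    calc ∑ i ∈ Finset.univ.filter (fun i => η i = true), A i y.1.2 ^ 2
        ≤ ∑ i, A i y.1.2 ^ 2 := by
          refine Finset.sum_le_sum_of_subset_of_nonneg (Finset.filter_subset _ _) ?_
          intro i _ _; positivity
      _ ≤ opNorm A ^ 2 := col_bound A _
  -- the abstract bound
  have habs := abstract_mgf V ppp hm hB hpc hindep I' J' hd uu hu hrow hcol
  -- identify the left-hand sides
  have hLHSpt : ∀ ω, τ * ∑ i ∈ Finset.univ.filter (fun i => η i = true),
      γ1 i ω * ∑ j ∈ Finset.univ.filter (fun j => η j = false), A i j ^ 2 * γ2 j ω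
      = ∑ x ∈ I', V x ω * ∑ y ∈ J', uu x y * V y ω := by
    intro ω
    have step1 : ∑ x ∈ I', V x ω * ∑ y ∈ J', uu x y * V y ω
        = ∑ x ∈ I', γ1 x.1.2 ω * ∑ y ∈ J', (τ * A x.1.2 y.1.2 ^ 2) * γ2 y.1.2 ω := by
      refine Finset.sum_congr rfl fun x hx => ?_
      rw [hV1g x (hxI x hx).1]
      congr 1
      refine Finset.sum_congr rfl fun y hy => ?_
      rw [hV2g y (hxJ y hy).1, hudef]
    have step2 : ∑ x ∈ I', γ1 x.1.2 ω * ∑ y ∈ J', (τ * A x.1.2 y.1.2 ^ 2) * γ2 y.1.2 ω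
        = ∑ i ∈ Finset.univ.filter (fun i => η i = true),
            γ1 i ω * ∑ y ∈ J', (τ * A i y.1.2 ^ 2) * γ2 y.1.2 ω :=
      reindexI (fun i => γ1 i ω * ∑ y ∈ J', (τ * A i y.1.2 ^ 2) * γ2 y.1.2 ω)
    have step3 : ∀ i : Fin n, ∑ y ∈ J', (τ * A i y.1.2 ^ 2) * γ2 y.1.2 ω
        = ∑ j ∈ Finset.univ.filter (fun j => η j = false), (τ * A i j ^ 2) * γ2 j ω :=
      fun i => reindexJ (fun j => (τ * A i j ^ 2) * γ2 j ω)
    rw [step1, step2]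
    rw [Finset.mul_sum]
    refine Finset.sum_congr rfl fun i _ => ?_
    rw [step3 i]
    have : ∑ j ∈ Finset.univ.filter (fun j => η j = false), (τ * A i j ^ 2) * γ2 j ω
        = τ * ∑ j ∈ Finset.univ.filter (fun j => η j = false), A i j ^ 2 * γ2 j ω := by
      rw [Finset.mul_sum]
      exact Finset.sum_congr rfl fun j _ => by ring
    rw [this]
    ring
  have hLHS : (∫ ω, Real.exp (τ * ∑ i ∈ Finset.univ.filter (fun i => η i = true),
      γ1 i ω * ∑ j ∈ Finset.univ.filter (fun j => η j = false), A i j ^ 2 * γ2 j ω) ∂μ)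
      = ∫ ω, Real.exp (∑ x ∈ I', V x ω * ∑ y ∈ J', uu x y * V y ω) ∂μ := by
    refine integral_congr_ae (Filter.Eventually.of_forall fun ω => ?_)
    exact congrArg Real.exp (hLHSpt ω)
  -- identify the right-hand side sums
  have hRHS : ∑ x ∈ I', ∑ y ∈ J', uu x y * ppp x * ppp y
      = τ * ∑ i ∈ Finset.univ.filter (fun i => η i = true),
          ∑ j ∈ Finset.univ.filter (fun j => η j = false), A i j ^ 2 * π1 i * π2 j := by
    have step1 : ∑ x ∈ I', ∑ y ∈ J', uu x y * ppp x * ppp y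
        = ∑ x ∈ I', ∑ y ∈ J', (τ * A x.1.2 y.1.2 ^ 2) * π1 x.1.2 * π2 y.1.2 := by
      refine Finset.sum_congr rfl fun x hx => Finset.sum_congr rfl fun y hy => ?_
      rw [hp1g x (hxI x hx).1, hp2g y (hxJ y hy).1, hudef]
    have step2 : ∑ x ∈ I', ∑ y ∈ J', (τ * A x.1.2 y.1.2 ^ 2) * π1 x.1.2 * π2 y.1.2
        = ∑ i ∈ Finset.univ.filter (fun i => η i = true),
            ∑ y ∈ J', (τ * A i y.1.2 ^ 2) * π1 i * π2 y.1.2 :=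
      reindexI (fun i => ∑ y ∈ J', (τ * A i y.1.2 ^ 2) * π1 i * π2 y.1.2)
    rw [step1, step2, Finset.mul_sum]
    refine Finset.sum_congr rfl fun i _ => ?_
    rw [reindexJ (fun j => (τ * A i j ^ 2) * π1 i * π2 j), Finset.mul_sum]
    exact Finset.sum_congr rfl fun j _ => by ring
  -- nonnegativity of the π's
  have hπ1nn : ∀ i, 0 ≤ π1 i := by
    intro i
    rw [← hπ1 i]
    refine integral_nonneg fun ω => ?_
    rcases hBer1 i ω with h | h <;> rw [h] <;> norm_num
  have hπ2nn : ∀ j, 0 ≤ π2 j := by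
    intro j
    rw [← hπ2 j]
    refine integral_nonneg fun ω => ?_
    rcases hBer2 j ω with h | h <;> rw [h] <;> norm_num
  -- compare the sums on the right-hand side
  have hS0nn : 0 ≤ ∑ i ∈ Finset.univ.filter (fun i => η i = true),
      ∑ j ∈ Finset.univ.filter (fun j => η j = false), A i j ^ 2 * π1 i * π2 j := by
    refine Finset.sum_nonneg fun i _ => Finset.sum_nonneg fun j _ => ?_
    have := hπ1nn i; have := hπ2nn j
    positivity
  have hsubset : ∑ i ∈ Finset.univ.filter (fun i => η i = true),
      ∑ j ∈ Finset.univ.filter (fun j => η j = false), A i j ^ 2 * π1 i * π2 j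
      ≤ ∑ i, ∑ j, if i ≠ j then A i j ^ 2 * π1 i * π2 j else 0 := by
    have hterm : ∀ i ∈ Finset.univ.filter (fun i => η i = true),
        ∑ j ∈ Finset.univ.filter (fun j => η j = false), A i j ^ 2 * π1 i * π2 j
        = ∑ j ∈ Finset.univ.filter (fun j => η j = false),
            (if i ≠ j then A i j ^ 2 * π1 i * π2 j else 0) := by
      intro i hi
      refine Finset.sum_congr rfl fun j hj => ?_
      have hij : i ≠ j := by
        intro he
        have h1 := (Finset.mem_filter.mp hi).2
        have h2 := (Finset.mem_filter.mp hj).2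
        rw [he, h2] at h1
        exact absurd h1 (by decide)
      rw [if_pos hij]
    rw [Finset.sum_congr rfl hterm]
    have hnn : ∀ (i j : Fin n), 0 ≤ (if i ≠ j then A i j ^ 2 * π1 i * π2 j else 0) := by
      intro i j
      by_cases h : i ≠ j
      · rw [if_pos h]
        have := hπ1nn i; have := hπ2nn j
        positivity
      · rw [if_neg h]
    calc ∑ i ∈ Finset.univ.filter (fun i => η i = true),
          ∑ j ∈ Finset.univ.filter (fun j => η j = false),
            (if i ≠ j then A i j ^ 2 * π1 i * π2 j else 0)
        ≤ ∑ i ∈ Finset.univ.filter (fun i => η i = true),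
            ∑ j, (if i ≠ j then A i j ^ 2 * π1 i * π2 j else 0) := by
          refine Finset.sum_le_sum fun i _ => ?_
          refine Finset.sum_le_sum_of_subset_of_nonneg (Finset.filter_subset _ _) ?_
          intro j _ _; exact hnn i j
      _ ≤ ∑ i, ∑ j, (if i ≠ j then A i j ^ 2 * π1 i * π2 j else 0) := by
          refine Finset.sum_le_sum_of_subset_of_nonneg (Finset.filter_subset _ _) ?_
          intro i _ _
          exact Finset.sum_nonneg fun j _ => hnn i j
  -- finish
  rw [hLHS]
  refine habs.trans ?_
  rw [Real.exp_le_exp, hRHS]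
  calc (4*(Real.exp (Real.exp 4⁻¹ - 1) - 1)) * (τ * ∑ i ∈ Finset.univ.filter (fun i => η i = true),
        ∑ j ∈ Finset.univ.filter (fun j => η j = false), A i j ^ 2 * π1 i * π2 j)
      ≤ 1.44 * (τ * ∑ i ∈ Finset.univ.filter (fun i => η i = true),
        ∑ j ∈ Finset.univ.filter (fun j => η j = false), A i j ^ 2 * π1 i * π2 j) := by
        refine mul_le_mul_of_nonneg_right const_le_144 ?_
        exact mul_nonneg hτ0.le hS0nn
    _ ≤ 1.44 * (τ * ∑ i, ∑ j, if i ≠ j then A i j ^ 2 * π1 i * π2 j else 0) := by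
        refine mul_le_mul_of_nonneg_left ?_ (by norm_num)
        exact mul_le_mul_of_nonneg_left hsubset hτ0.le
    _ = 1.44 * τ * ∑ i, ∑ j, if i ≠ j then A i j ^ 2 * π1 i * π2 j else 0 := by ring
end
end

section
/- Let (X, Y) be a pair of real random variables with EX = μ^X, EY = μ^Y, and Cov(X, Y) = σ, and let (δ^X, δ^Y) be a pair of (possibly correlated) Bernoulli random variables with E δ^X = π^X > 0, E δ^Y = π^Y > 0, E δ^X δ^Y = π^{XY} > 0, independent of (X, Y). Let (X_i, Y_i, δ_i^X, δ_i^Y), i = 1, …, n (n ≥ 2), be i.i.d. copies, and set X̃_i = δ_i^X X_i and Ỹ_i = δ_i^Y Y_i. Then the estimator s̃ = (n π^{XY})^{-1} Σ_{i=1}^n X̃_i Ỹ_i − {n(n−1) π^X π^Y}^{-1} Σ_{i ≠ j} X̃_i Ỹ_j is unbiased: E s̃ = σ. In particular, E[Σ_{i=1}^n X̃_i Ỹ_i] = n π^{XY} (σ + μ^X μ^Y) and E[Σ_{i ≠ j} X̃_i Ỹ_j] = n(n−1) π^X π^Y μ^X μ^Y. -/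
open MeasureTheory ProbabilityTheory Real Finset

noncomputable section

/-- Unbiasedness of the inverse-probability-weighted cross-covariance estimator under
MCAR missingness (Section 3.2 of the paper). -/
theorem ipw_cross_covariance_unbiased
    (n : ℕ) (hn : 2 ≤ n)
    (Ω : Type) (_mΩ : MeasurableSpace Ω) (μ : Measure Ω) [IsProbabilityMeasure μ]
    (X Y δX δY : Fin n → Ω → ℝ) (muX muY σ πX πY πXY : ℝ)
    (hXm : ∀ i, Measurable (X i)) (hYm : ∀ i, Measurable (Y i))
    (hδXm : ∀ i, Measurable (δX i)) (hδYm : ∀ i, Measurable (δY i))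
    -- the quadruples (X_i, Y_i, δ_i^X, δ_i^Y) are i.i.d. across i
    (hiid : iIndepFun
      (fun i : Fin n => fun ω => (X i ω, Y i ω, δX i ω, δY i ω)) μ)
    (hident : ∀ i j : Fin n, IdentDistrib
      (fun ω => (X i ω, Y i ω, δX i ω, δY i ω))
      (fun ω => (X j ω, Y j ω, δX j ω, δY j ω)) μ μ)
    -- MCAR: the missing indicators are independent of the data
    (hMCAR : ∀ i, IndepFun (fun ω => (X i ω, Y i ω)) (fun ω => (δX i ω, δY i ω)) μ)
    -- moments of the data
    (hmuX : ∀ i, ∫ ω, X i ω ∂μ = muX) (hmuY : ∀ i, ∫ ω, Y i ω ∂μ = muY)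
    (hcov : ∀ i, ∫ ω, (X i ω - muX) * (Y i ω - muY) ∂μ = σ)
    (hXint : ∀ i, Integrable (X i) μ) (hYint : ∀ i, Integrable (Y i) μ)
    (hXYint : ∀ i j, Integrable (fun ω => X i ω * Y j ω) μ)
    -- the indicators are Bernoulli with positive moments
    (hBerX : ∀ i ω, δX i ω = 0 ∨ δX i ω = 1) (hBerY : ∀ i ω, δY i ω = 0 ∨ δY i ω = 1)
    (hπX : ∀ i, ∫ ω, δX i ω ∂μ = πX) (hπY : ∀ i, ∫ ω, δY i ω ∂μ = πY)
    (hπXY : ∀ i, ∫ ω, δX i ω * δY i ω ∂μ = πXY)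
    (hπXpos : 0 < πX) (hπYpos : 0 < πY) (hπXYpos : 0 < πXY) :
    (∫ ω, ((∑ i, (δX i ω * X i ω) * (δY i ω * Y i ω)) / ((n : ℝ) * πXY)
        - (∑ i, ∑ j, if i ≠ j then (δX i ω * X i ω) * (δY j ω * Y j ω) else 0)
            / ((n : ℝ) * ((n : ℝ) - 1) * πX * πY)) ∂μ) = σ
    ∧ (∫ ω, ∑ i, (δX i ω * X i ω) * (δY i ω * Y i ω) ∂μ)
        = (n : ℝ) * πXY * (σ + muX * muY)
    ∧ (∫ ω, ∑ i, ∑ j, if i ≠ j then (δX i ω * X i ω) * (δY j ω * Y j ω) else 0 ∂μ)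
        = (n : ℝ) * ((n : ℝ) - 1) * πX * πY * muX * muY := by
  classical
  -- measurability of quadruples
  have hquadm : ∀ i, Measurable (fun ω => (X i ω, Y i ω, δX i ω, δY i ω)) := fun i =>
    (hXm i).prodMk ((hYm i).prodMk ((hδXm i).prodMk (hδYm i)))
  have hδXb : ∀ i ω, |δX i ω| ≤ 1 := by
    intro i ω; rcases hBerX i ω with h | h <;> simp [h]
  have hδYb : ∀ i ω, |δY i ω| ≤ 1 := by
    intro i ω; rcases hBerY i ω with h | h <;> simp [h]
  -- integrability facts
  have hA_int : ∀ i, Integrable (fun ω => δX i ω * X i ω) μ := by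
    intro i
    refine Integrable.mono (hXint i) ((hδXm i).mul (hXm i)).aestronglyMeasurable
      (Filter.Eventually.of_forall fun ω => ?_)
    simp only [norm_mul, Real.norm_eq_abs]
    calc |δX i ω| * |X i ω| ≤ 1 * |X i ω| :=
          mul_le_mul_of_nonneg_right (hδXb i ω) (abs_nonneg _)
      _ = |X i ω| := one_mul _
  have hB_int : ∀ j, Integrable (fun ω => δY j ω * Y j ω) μ := by
    intro j
    refine Integrable.mono (hYint j) ((hδYm j).mul (hYm j)).aestronglyMeasurable
      (Filter.Eventually.of_forall fun ω => ?_)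
    simp only [norm_mul, Real.norm_eq_abs]
    calc |δY j ω| * |Y j ω| ≤ 1 * |Y j ω| :=
          mul_le_mul_of_nonneg_right (hδYb j ω) (abs_nonneg _)
      _ = |Y j ω| := one_mul _
  have hδδ_int : ∀ i j, Integrable (fun ω => δX i ω * δY j ω) μ := by
    intro i j
    refine Integrable.mono (integrable_const (1 : ℝ))
      ((hδXm i).mul (hδYm j)).aestronglyMeasurable
      (Filter.Eventually.of_forall fun ω => ?_)
    simp only [norm_mul, Real.norm_eq_abs]
    calc |δX i ω| * |δY j ω| ≤ 1 * 1 :=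
          mul_le_mul (hδXb i ω) (hδYb j ω) (abs_nonneg _) zero_le_one
      _ ≤ |(1 : ℝ)| := by norm_num
  have hterm_int : ∀ i j, Integrable (fun ω => (δX i ω * X i ω) * (δY j ω * Y j ω)) μ := by
    intro i j
    refine Integrable.mono (hXYint i j)
      (((hδXm i).mul (hXm i)).mul ((hδYm j).mul (hYm j))).aestronglyMeasurable
      (Filter.Eventually.of_forall fun ω => ?_)
    simp only [norm_mul, Real.norm_eq_abs]
    calc |δX i ω| * |X i ω| * (|δY j ω| * |Y j ω|)
        ≤ 1 * |X i ω| * (1 * |Y j ω|) := by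
          gcongr
          exacts [hδXb i ω, hδYb j ω]
      _ = |X i ω| * |Y j ω| := by ring
  -- E[X_i Y_i] = σ + muX * muY
  have hEXY : ∀ i, ∫ ω, X i ω * Y i ω ∂μ = σ + muX * muY := by
    intro i
    have h := hcov i
    have heq : (fun ω => (X i ω - muX) * (Y i ω - muY)) =
        fun ω => X i ω * Y i ω - muX * Y i ω - muY * X i ω + muX * muY := by
      funext ω; ring
    rw [heq] at h
    have i1 : Integrable (fun ω => muX * Y i ω) μ := (hYint i).const_mul _
    have i2 : Integrable (fun ω => muY * X i ω) μ := (hXint i).const_mul _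
    have ia : Integrable (fun ω => X i ω * Y i ω - muX * Y i ω) μ := (hXYint i i).sub i1
    have ib : Integrable (fun ω => X i ω * Y i ω - muX * Y i ω - muY * X i ω) μ := ia.sub i2
    rw [integral_add ib (integrable_const _),
      integral_sub ia i2, integral_sub (hXYint i i) i1,
      integral_const_mul, integral_const_mul, integral_const, hmuX i, hmuY i] at h
    have hone : μ.real Set.univ = 1 := by simp
    rw [hone, one_smul] at h
    linear_combination h
  -- diagonal terms
  have hdiag : ∀ i, ∫ ω, (δX i ω * X i ω) * (δY i ω * Y i ω) ∂μ
      = πXY * (σ + muX * muY) := by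
    intro i
    have hind : IndepFun (fun ω => X i ω * Y i ω) (fun ω => δX i ω * δY i ω) μ :=
      (hMCAR i).comp (measurable_fst.mul measurable_snd)
        (measurable_fst.mul measurable_snd)
    have heq : (fun ω => (δX i ω * X i ω) * (δY i ω * Y i ω)) =
        fun ω => (X i ω * Y i ω) * (δX i ω * δY i ω) := by funext ω; ring
    calc ∫ ω, (δX i ω * X i ω) * (δY i ω * Y i ω) ∂μ
        = ∫ ω, (X i ω * Y i ω) * (δX i ω * δY i ω) ∂μ := by rw [heq]
      _ = (∫ ω, X i ω * Y i ω ∂μ) * ∫ ω, δX i ω * δY i ω ∂μ :=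
          hind.integral_fun_mul_eq_mul_integral (hXYint i i).aestronglyMeasurable (hδδ_int i i).aestronglyMeasurable
      _ = πXY * (σ + muX * muY) := by rw [hEXY i, hπXY i]; ring
  -- marginal IPW means
  have hEA : ∀ i, ∫ ω, δX i ω * X i ω ∂μ = πX * muX := by
    intro i
    have hind : IndepFun (X i) (δX i) μ := (hMCAR i).comp measurable_fst measurable_fst
    have : ∫ ω, X i ω * δX i ω ∂μ = (∫ ω, X i ω ∂μ) * ∫ ω, δX i ω ∂μ :=
      hind.integral_fun_mul_eq_mul_integral (hXint i).aestronglyMeasurable (Integrable.aestronglyMeasurable <| Integrable.mono (integrable_const (1:ℝ)) (hδXm i).aestronglyMeasurable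
        (Filter.Eventually.of_forall fun ω => by
          simpa [Real.norm_eq_abs] using hδXb i ω))
    calc ∫ ω, δX i ω * X i ω ∂μ = ∫ ω, X i ω * δX i ω ∂μ := by
          congr 1; funext ω; ring
      _ = πX * muX := by rw [this, hmuX i, hπX i]; ring
  have hEB : ∀ j, ∫ ω, δY j ω * Y j ω ∂μ = πY * muY := by
    intro j
    have hind : IndepFun (Y j) (δY j) μ := (hMCAR j).comp measurable_snd measurable_snd
    have : ∫ ω, Y j ω * δY j ω ∂μ = (∫ ω, Y j ω ∂μ) * ∫ ω, δY j ω ∂μ :=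
      hind.integral_fun_mul_eq_mul_integral (hYint j).aestronglyMeasurable (Integrable.aestronglyMeasurable <| Integrable.mono (integrable_const (1:ℝ)) (hδYm j).aestronglyMeasurable
        (Filter.Eventually.of_forall fun ω => by
          simpa [Real.norm_eq_abs] using hδYb j ω))
    calc ∫ ω, δY j ω * Y j ω ∂μ = ∫ ω, Y j ω * δY j ω ∂μ := by
          congr 1; funext ω; ring
      _ = πY * muY := by rw [this, hmuY j, hπY j]; ring
  -- off-diagonal terms
  have hoff : ∀ i j : Fin n, i ≠ j →
      ∫ ω, (δX i ω * X i ω) * (δY j ω * Y j ω) ∂μ = (πX * muX) * (πY * muY) := by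
    intro i j hij
    have hq : IndepFun (fun ω => (X i ω, Y i ω, δX i ω, δY i ω))
        (fun ω => (X j ω, Y j ω, δX j ω, δY j ω)) μ := hiid.indepFun hij
    have hind : IndepFun (fun ω => δX i ω * X i ω) (fun ω => δY j ω * Y j ω) μ :=
      hq.comp ((measurable_snd.snd.fst).mul measurable_fst)
        ((measurable_snd.snd.snd).mul measurable_snd.fst)
    have h := hind.integral_fun_mul_eq_mul_integral (hA_int i).aestronglyMeasurable (hB_int j).aestronglyMeasurable
    rw [hEA i, hEB j] at h
    exact h
  -- n as a real
  have hn1 : (1 : ℝ) ≤ (n : ℝ) := by exact_mod_cast Nat.one_le_of_lt hn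
  have hnne : (n : ℝ) ≠ 0 := by positivity
  have hn1ne : (n : ℝ) - 1 ≠ 0 := by
    have : (2 : ℝ) ≤ (n : ℝ) := by exact_mod_cast hn
    linarith
  -- second conclusion
  have h2 : (∫ ω, ∑ i, (δX i ω * X i ω) * (δY i ω * Y i ω) ∂μ)
      = (n : ℝ) * πXY * (σ + muX * muY) := by
    rw [integral_finset_sum _ (fun i _ => hterm_int i i)]
    simp only [hdiag]
    rw [Finset.sum_const, Finset.card_univ, Fintype.card_fin, nsmul_eq_mul]
    ring
  -- third conclusion
  have hite_int : ∀ i j : Fin n, Integrable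
      (fun ω => if i ≠ j then (δX i ω * X i ω) * (δY j ω * Y j ω) else 0) μ := by
    intro i j
    by_cases h : i = j <;> simp [h, hterm_int]
  have h3 : (∫ ω, ∑ i, ∑ j, if i ≠ j then (δX i ω * X i ω) * (δY j ω * Y j ω) else 0 ∂μ)
      = (n : ℝ) * ((n : ℝ) - 1) * πX * πY * muX * muY := by
    have hint_inner : ∀ i : Fin n, Integrable
        (fun ω => ∑ j, if i ≠ j then (δX i ω * X i ω) * (δY j ω * Y j ω) else 0) μ :=
      fun i => integrable_finset_sum _ (fun j _ => hite_int i j)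
    rw [integral_finset_sum _ (fun i _ => hint_inner i)]
    have : ∀ i : Fin n,
        (∫ ω, ∑ j, if i ≠ j then (δX i ω * X i ω) * (δY j ω * Y j ω) else 0 ∂μ)
        = ((n : ℝ) - 1) * ((πX * muX) * (πY * muY)) := by
      intro i
      rw [integral_finset_sum _ (fun j _ => hite_int i j)]
      have hval : ∀ j : Fin n,
          (∫ ω, if i ≠ j then (δX i ω * X i ω) * (δY j ω * Y j ω) else 0 ∂μ)
          = if i ≠ j then (πX * muX) * (πY * muY) else 0 := by
        intro j
        by_cases h : i = j
        · simp [h]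
        · simp only [h, ne_eq, not_false_eq_true, if_true]
          exact hoff i j h
      simp only [hval]
      have hsum : ∀ c : ℝ, (∑ j : Fin n, if i ≠ j then c else 0) = ((n : ℝ) - 1) * c := by
        intro c
        have : ∀ j : Fin n, (if i ≠ j then c else 0) = c - (if i = j then c else 0) := by
          intro j; by_cases h : i = j <;> simp [h]
        simp only [this]
        rw [Finset.sum_sub_distrib, Finset.sum_const, Finset.sum_ite_eq, Finset.card_univ,
          Fintype.card_fin, nsmul_eq_mul]
        simp [mul_comm]; ring
      rw [hsum]
    simp only [this]
    rw [Finset.sum_const, Finset.card_univ, Fintype.card_fin, nsmul_eq_mul]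
    ring
  refine ⟨?_, h2, h3⟩
  have hS1 : Integrable (fun ω => ∑ i, (δX i ω * X i ω) * (δY i ω * Y i ω)) μ :=
    integrable_finset_sum _ (fun i _ => hterm_int i i)
  have hS2 : Integrable
      (fun ω => ∑ i, ∑ j, if i ≠ j then (δX i ω * X i ω) * (δY j ω * Y j ω) else 0) μ :=
    integrable_finset_sum _ (fun i _ => integrable_finset_sum _ (fun j _ => hite_int i j))
  rw [integral_sub (hS1.div_const _) (hS2.div_const _), integral_div, integral_div, h2, h3]
  field_simp
  ring
end
end
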